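/- arXiv:1504.04179 — 6 statements merged into one kernel-verified Lean document; each statement's English description precedes it below -/
import Mathlib

section
/- Let H be a finite-dimensional real inner product space, let A : H → H be a symmetric (self-adjoint) positive definite linear operator, let τ > 0, let σ ≥ √(3/8), and set Ã = A + (τ/2)A², B = I + τA + (τ²/2)A², G = (τ/2)(I + (4σ − 3/2)τA + (2σ² − 3/4)τ²A²). Suppose the sequences (yⁿ) in H and (φⁿ) in H satisfy, for every n ≥ 1, the three-level factorized scheme (I + στA)² (yⁿ⁺¹ − yⁿ)/τ + (I + τA + (τ²/2)A² − (I + στA)²)(yⁿ − yⁿ⁻¹)/τ + (A + (τ/2)A²) yⁿ = φⁿ. Then for every n ≥ 1 the a priori estimate ℰ_{n+1} ≤ ℰ_n + (τ/2)⟨B⁻¹φⁿ, φⁿ⟩ holds, where ℰ_n = ⟨Ã (yⁿ + yⁿ⁻¹)/2, (yⁿ + yⁿ⁻¹)/2⟩ + ⟨G (yⁿ − yⁿ⁻¹)/τ, (yⁿ − yⁿ⁻¹)/τ⟩. -/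
/-!
Energy method for three-level schemes. Writing the scheme in the canonical form
`D yₜ + (B - D) y_t̄ + Ã yⁿ = φⁿ` with `D = (I + στA)²`, the operator `G` is exactly
`τ (D - B/2 - τÃ/4)`. Pairing the scheme with the central difference quotient
`r = (yⁿ⁺¹ - yⁿ⁻¹)/(2τ)` turns it into the identity `ℰₙ₊₁ = ℰₙ + 2τ⟪φⁿ, r⟫ - 2τ⟪B r, r⟫`, and
the estimate follows from `4⟪φ, r⟫ - 4⟪B r, r⟫ ≤ ⟪B⁻¹φ, φ⟫`, i.e. from
`⟪B(B⁻¹φ - 2r), B⁻¹φ - 2r⟫ ≥ 0`.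
-/

open RealInnerProductSpace

section EnergyMethod

variable {H : Type*} [NormedAddCommGroup H] [InnerProductSpace ℝ H]

namespace LinearMap

theorem IsSymmetric.comp_self {A : H →ₗ[ℝ] H} (hA : A.IsSymmetric) : (A ∘ₗ A).IsSymmetric :=
  fun x y => by rw [comp_apply, comp_apply, hA, hA]

theorem IsSymmetric.smul_real {A : H →ₗ[ℝ] H} (hA : A.IsSymmetric) (c : ℝ) :
    (c • A).IsSymmetric :=
  hA.smul (conj_trivial c)

theorem IsSymmetric.inner_apply_self_sub_inner_apply_self {T : H →ₗ[ℝ] H} (hT : T.IsSymmetric)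
    (x y : H) : ⟪T x, x⟫ - ⟪T y, y⟫ = ⟪T (x + y), x - y⟫ := by
  rw [map_add, inner_add_left, inner_sub_right, inner_sub_right, hT y x, real_inner_comm (T x) y]
  ring

/- `I + τA + (τ²/2)A²` is the second Taylor polynomial of `exp (τA)`. For symmetric `A` it is
positive definite whatever the sign of `τ`: twice its quadratic form is `‖v + τAv‖² + ‖v‖²`. -/
theorem IsSymmetric.two_mul_inner_expTaylor_apply_self {A : H →ₗ[ℝ] H} (hA : A.IsSymmetric)
    (τ : ℝ) (v : H) :
    2 * ⟪(LinearMap.id + τ • A + (τ ^ 2 / 2) • (A ∘ₗ A) : H →ₗ[ℝ] H) v, v⟫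
      = ‖v + τ • A v‖ ^ 2 + ‖v‖ ^ 2 := by
  simp only [add_apply, smul_apply, comp_apply, id_apply, inner_add_left, real_inner_smul_left,
    ← hA (A v) v, ← real_inner_self_eq_norm_sq, inner_add_right, real_inner_smul_right,
    real_inner_comm v (A v)]
  ring

theorem IsSymmetric.isPositive_expTaylor {A : H →ₗ[ℝ] H} (hA : A.IsSymmetric) (τ : ℝ) :
    (LinearMap.id + τ • A + (τ ^ 2 / 2) • (A ∘ₗ A) : H →ₗ[ℝ] H).IsPositive := by
  refine (isPositive_iff _).mpr ⟨?_, fun v => ?_⟩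
  · exact (IsSymmetric.id.add (hA.smul_real τ)).add (hA.comp_self.smul_real _)
  · nlinarith [hA.two_mul_inner_expTaylor_apply_self τ v, sq_nonneg ‖v + τ • A v‖,
      sq_nonneg ‖v‖]

theorem isUnit_of_inner_apply_self_pos [FiniteDimensional ℝ H] {T : H →ₗ[ℝ] H}
    (hT : ∀ v, v ≠ 0 → 0 < ⟪T v, v⟫) : IsUnit T := by
  refine (isUnit_iff_ker_eq_bot T).mpr (ker_eq_bot'.mpr fun v hv => ?_)
  by_contra hv0
  simpa [hv] using hT v hv0

theorem IsSymmetric.isUnit_expTaylor [FiniteDimensional ℝ H] {A : H →ₗ[ℝ] H}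
    (hA : A.IsSymmetric) (τ : ℝ) :
    IsUnit (LinearMap.id + τ • A + (τ ^ 2 / 2) • (A ∘ₗ A) : H →ₗ[ℝ] H) :=
  isUnit_of_inner_apply_self_pos fun v hv => by
    nlinarith [hA.two_mul_inner_expTaylor_apply_self τ v, sq_nonneg ‖v + τ • A v‖,
      pow_pos (norm_pos_iff.mpr hv) 2]

theorem IsPositive.four_inner_sub_le_inner_inverse {B : H →ₗ[ℝ] H} (hB : B.IsPositive)
    (hBu : IsUnit B) (φ r : H) :
    4 * ⟪φ, r⟫ - 4 * ⟪B r, r⟫ ≤ ⟪Ring.inverse B φ, φ⟫ := by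
  set z := Ring.inverse B φ
  have hz : B z = φ := by
    simpa using congr($(Ring.mul_inverse_cancel B hBu) φ)
  have := hB.inner_nonneg_left (z - (2 : ℝ) • r)
  rw [← hz]
  simp only [map_sub, map_smul, inner_sub_left, inner_sub_right, real_inner_smul_left,
    real_inner_smul_right, hB.isSymmetric r z, real_inner_comm (B z) r,
    real_inner_comm z (B z)] at this ⊢
  linarith

end LinearMap

/-- The energy `ℰ` of the pair of consecutive layers `(u, v) = (yⁿ⁻¹, yⁿ)`. -/
noncomputable def threeLevelEnergy (Atil G : H →ₗ[ℝ] H) (τ : ℝ) (u v : H) : ℝ :=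
  ⟪Atil ((1 / 2 : ℝ) • (v + u)), (1 / 2 : ℝ) • (v + u)⟫ + ⟪G (τ⁻¹ • (v - u)), τ⁻¹ • (v - u)⟫

theorem threeLevelEnergy_step {Atil B D G : H →ₗ[ℝ] H} {τ : ℝ} (hτ : τ ≠ 0)
    (hAtil : Atil.IsSymmetric) (hG : G.IsSymmetric)
    (hGD : G = τ • (D - (1 / 2 : ℝ) • B - (τ / 4) • Atil)) {u v w φ : H}
    (h : D (τ⁻¹ • (w - v)) + (B - D) (τ⁻¹ • (v - u)) + Atil v = φ) :
    threeLevelEnergy Atil G τ v w = threeLevelEnergy Atil G τ u v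
      + 2 * τ * ⟪φ, (2 * τ)⁻¹ • (w - u)⟫
      - 2 * τ * ⟪B ((2 * τ)⁻¹ • (w - u)), (2 * τ)⁻¹ • (w - u)⟫ := by
  set p := τ⁻¹ • (v - u)
  set q := τ⁻¹ • (w - v)
  set r := (2 * τ)⁻¹ • (w - u)
  set s := (1 / 2 : ℝ) • (v + u)
  set s' := (1 / 2 : ℝ) • (w + v)
  have hr : q + p = (2 : ℝ) • r := by
    simp only [p, q, r, smul_smul]
    rw [mul_inv, ← mul_assoc, mul_inv_cancel₀ two_ne_zero, one_mul]
    module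
  have hs : s' - s = τ • r := by
    simp only [s, s', r, smul_smul]
    rw [mul_inv, ← mul_assoc, mul_comm τ, mul_assoc, mul_inv_cancel₀ hτ, mul_one]
    module
  have hφ : φ = B r + τ⁻¹ • G (q - p) + (1 / 2 : ℝ) • Atil (s' + s) := by
    subst hGD h
    simp only [p, q, r, s, s', LinearMap.sub_apply, LinearMap.smul_apply, map_add, map_sub,
      map_smul, smul_add, smul_sub, smul_smul]
    match_scalars <;> field_simp <;> ring
  calc threeLevelEnergy Atil G τ v w
      = threeLevelEnergy Atil G τ u v + ⟪Atil (s' + s), s' - s⟫ + ⟪G (q + p), q - p⟫ := by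
        unfold threeLevelEnergy
        rw [← hAtil.inner_apply_self_sub_inner_apply_self,
          ← hG.inner_apply_self_sub_inner_apply_self]
        ring
    _ = _ := by
        rw [hφ, hs, hr, map_smul]
        simp only [inner_add_left, real_inner_smul_left, real_inner_smul_right]
        rw [hG r, real_inner_comm (G (q - p)) r]
        field_simp
        ring

end EnergyMethod

theorem stmt_0_general {H : Type*} [NormedAddCommGroup H] [InnerProductSpace ℝ H]
    [FiniteDimensional ℝ H]
    (A : H →ₗ[ℝ] H)
    (hsym : ∀ x y : H, ⟪A x, y⟫ = ⟪x, A y⟫)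
    (τ σ : ℝ) (hτ : 0 < τ)
    (Atil B G P : H →ₗ[ℝ] H)
    (hAtil : Atil = A + (τ / 2) • (A ∘ₗ A))
    (hB : B = LinearMap.id + τ • A + (τ ^ 2 / 2) • (A ∘ₗ A))
    (hG : G = (τ / 2) • (LinearMap.id + ((4 * σ - 3 / 2) * τ) • A
      + ((2 * σ ^ 2 - 3 / 4) * τ ^ 2) • (A ∘ₗ A)))
    (hP : P = LinearMap.id + (σ * τ) • A)
    (y φ : ℕ → H)
    (hscheme : ∀ n : ℕ, 1 ≤ n →
      (P ∘ₗ P) (τ⁻¹ • (y (n + 1) - y n))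
        + (B - P ∘ₗ P) (τ⁻¹ • (y n - y (n - 1)))
        + Atil (y n) = φ n)
    (E : ℕ → ℝ)
    (hE : ∀ n : ℕ, E n =
      ⟪Atil ((1 / 2 : ℝ) • (y n + y (n - 1))), (1 / 2 : ℝ) • (y n + y (n - 1))⟫
      + ⟪G (τ⁻¹ • (y n - y (n - 1))), τ⁻¹ • (y n - y (n - 1))⟫) :
    ∀ n : ℕ, 1 ≤ n →
      E (n + 1) ≤ E n + (τ / 2) * ⟪Ring.inverse B (φ n), φ n⟫ := by
  have hA : A.IsSymmetric := hsym
  have hAtil_sym : Atil.IsSymmetric := hAtil ▸ hA.add (hA.comp_self.smul_real _)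
  have hG_sym : G.IsSymmetric := hG ▸
    ((LinearMap.IsSymmetric.id.add (hA.smul_real _)).add (hA.comp_self.smul_real _)).smul_real _
  have hB_pos : B.IsPositive := hB ▸ hA.isPositive_expTaylor τ
  have hB_unit : IsUnit B := hB ▸ hA.isUnit_expTaylor τ
  have hGD : G = τ • (P ∘ₗ P - (1 / 2 : ℝ) • B - (τ / 4) • Atil) := by
    subst hAtil hB hG hP
    ext v
    simp only [LinearMap.smul_apply, LinearMap.add_apply, LinearMap.sub_apply,
      LinearMap.comp_apply, LinearMap.id_apply, map_add, map_smul]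
    module
  have hE' : ∀ n, E n = threeLevelEnergy Atil G τ (y (n - 1)) (y n) := hE
  intro n hn
  rw [hE' (n + 1), hE' n, Nat.add_sub_cancel,
    threeLevelEnergy_step hτ.ne' hAtil_sym hG_sym hGD (hscheme n hn)]
  have young := hB_pos.four_inner_sub_le_inner_inverse hB_unit (φ n)
    ((2 * τ)⁻¹ • (y (n + 1) - y (n - 1)))
  linarith [mul_le_mul_of_nonneg_left young hτ.le]

/-- A priori estimate for the three-level factorized scheme
`(I + στA)² (yⁿ⁺¹ − yⁿ)/τ + (I + τA + (τ²/2)A² − (I + στA)²)(yⁿ − yⁿ⁻¹)/τ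
 + (A + (τ/2)A²) yⁿ = φⁿ`
with a symmetric positive definite `A`, `τ > 0` and `σ ≥ √(3/8)`:
`ℰ_{n+1} ≤ ℰ_n + (τ/2)⟨B⁻¹φⁿ, φⁿ⟩`.  Here `P = I + στA`, so `P ∘ₗ P = (I + στA)²`. -/
theorem stmt_0 {H : Type*} [NormedAddCommGroup H] [InnerProductSpace ℝ H]
    [FiniteDimensional ℝ H]
    (A : H →ₗ[ℝ] H)
    (hsym : ∀ x y : H, ⟪A x, y⟫ = ⟪x, A y⟫)
    (hpos : ∀ v : H, v ≠ 0 → 0 < ⟪A v, v⟫)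
    (τ σ : ℝ) (hτ : 0 < τ) (hσ : Real.sqrt (3 / 8) ≤ σ)
    (Atil B G P : H →ₗ[ℝ] H)
    (hAtil : Atil = A + (τ / 2) • (A ∘ₗ A))
    (hB : B = LinearMap.id + τ • A + (τ ^ 2 / 2) • (A ∘ₗ A))
    (hG : G = (τ / 2) • (LinearMap.id + ((4 * σ - 3 / 2) * τ) • A
      + ((2 * σ ^ 2 - 3 / 4) * τ ^ 2) • (A ∘ₗ A)))
    (hP : P = LinearMap.id + (σ * τ) • A)
    (y φ : ℕ → H)
    (hscheme : ∀ n : ℕ, 1 ≤ n →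
      (P ∘ₗ P) (τ⁻¹ • (y (n + 1) - y n))
        + (B - P ∘ₗ P) (τ⁻¹ • (y n - y (n - 1)))
        + Atil (y n) = φ n)
    (E : ℕ → ℝ)
    (hE : ∀ n : ℕ, E n =
      ⟪Atil ((1 / 2 : ℝ) • (y n + y (n - 1))), (1 / 2 : ℝ) • (y n + y (n - 1))⟫
      + ⟪G (τ⁻¹ • (y n - y (n - 1))), τ⁻¹ • (y n - y (n - 1))⟫) :
    ∀ n : ℕ, 1 ≤ n →
      E (n + 1) ≤ E n + (τ / 2) * ⟪Ring.inverse B (φ n), φ n⟫ :=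
  stmt_0_general A hsym τ σ hτ Atil B G P hAtil hB hG hP y φ hscheme E hE
end

section
/- Let H be a finite-dimensional real inner product space, let A : H → H be a symmetric (self-adjoint) positive definite linear operator, let τ > 0 and σ ≥ √(3/8). Then the operator G = (τ/2)(I + (4σ − 3/2)τA + (2σ² − 3/4)τ²A²) is symmetric positive definite, i.e., ⟨Gv, v⟩ > 0 for every nonzero v ∈ H. -/
/-!
For `σ ≥ √(3/8)` both coefficients `(4σ - 3/2)τ` and `(2σ² - 3/4)τ²` are nonnegative, and
`A ∘ A` is positive because `⟪A (A v), v⟫ = ‖A v‖²`. So `G = (τ/2)(I + P)` with `P` positive,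
whence `⟪G v, v⟫ ≥ (τ/2)‖v‖²`.
-/

open RealInnerProductSpace

namespace LinearMap

variable {𝕜 E : Type*} [RCLike 𝕜] [NormedAddCommGroup E] [InnerProductSpace 𝕜 E]

theorem IsSymmetric.isPositive_comp_self {A : E →ₗ[𝕜] E} (hA : A.IsSymmetric) :
    (A ∘ₗ A).IsPositive := by
  refine ⟨fun x y => ?_, fun x => ?_⟩
  · simp only [comp_apply, hA _ y, hA x]
  · simpa only [comp_apply, hA (A x) x] using inner_self_nonneg (x := A x)

theorem IsPositive.re_inner_id_add_self_pos {T : E →ₗ[𝕜] E} (hT : T.IsPositive) {v : E}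
    (hv : v ≠ 0) : 0 < RCLike.re (inner 𝕜 ((LinearMap.id + T : E →ₗ[𝕜] E) v) v) := by
  rw [add_apply, id_apply, inner_add_left, map_add]
  exact add_pos_of_pos_of_nonneg (re_inner_self_pos.mpr hv) (hT.re_inner_nonneg_left v)

end LinearMap

theorem stmt_1_general {H : Type*} [NormedAddCommGroup H] [InnerProductSpace ℝ H]
    (A : H →ₗ[ℝ] H)
    (hsym : ∀ x y : H, ⟪A x, y⟫ = ⟪x, A y⟫)
    (hpos : ∀ v : H, v ≠ 0 → 0 < ⟪A v, v⟫)
    (τ σ : ℝ) (hτ : 0 < τ) (hσ : Real.sqrt (3 / 8) ≤ σ)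
    (G : H →ₗ[ℝ] H)
    (hG : G = (τ / 2) • (LinearMap.id + ((4 * σ - 3 / 2) * τ) • A
      + ((2 * σ ^ 2 - 3 / 4) * τ ^ 2) • (A ∘ₗ A))) :
    (∀ x y : H, ⟪G x, y⟫ = ⟪x, G y⟫) ∧ ∀ v : H, v ≠ 0 → 0 < ⟪G v, v⟫ := by
  obtain ⟨hσ0, hσsq⟩ := Real.sqrt_le_iff.mp hσ
  have hA : A.IsPositive := ⟨hsym, fun v => by
    rcases eq_or_ne v 0 with rfl | hv
    · simp
    · exact (hpos v hv).le⟩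
  have hP : (((4 * σ - 3 / 2) * τ) • A + ((2 * σ ^ 2 - 3 / 4) * τ ^ 2) • (A ∘ₗ A)).IsPositive :=
    (hA.smul_of_nonneg (by nlinarith)).add
      (hA.isSymmetric.isPositive_comp_self.smul_of_nonneg (by nlinarith))
  rw [add_assoc] at hG
  subst hG
  refine ⟨(LinearMap.isPositive_id.add hP).isSymmetric.smul (conj_trivial _), fun v hv => ?_⟩
  rw [LinearMap.smul_apply, inner_smul_left, conj_trivial]
  exact mul_pos (half_pos hτ) (hP.re_inner_id_add_self_pos hv)

/-- For a symmetric positive definite operator `A` on a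
finite-dimensional real inner product space, `τ > 0` and `σ ≥ √(3/8)`,
the operator `G = (τ/2)(I + (4σ − 3/2)τA + (2σ² − 3/4)τ²A²)` is
symmetric positive definite. -/
theorem stmt_1 {H : Type*} [NormedAddCommGroup H] [InnerProductSpace ℝ H]
    [FiniteDimensional ℝ H]
    (A : H →ₗ[ℝ] H)
    (hsym : ∀ x y : H, ⟪A x, y⟫ = ⟪x, A y⟫)
    (hpos : ∀ v : H, v ≠ 0 → 0 < ⟪A v, v⟫)
    (τ σ : ℝ) (hτ : 0 < τ) (hσ : Real.sqrt (3 / 8) ≤ σ)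
    (G : H →ₗ[ℝ] H)
    (hG : G = (τ / 2) • (LinearMap.id + ((4 * σ - 3 / 2) * τ) • A
      + ((2 * σ ^ 2 - 3 / 4) * τ ^ 2) • (A ∘ₗ A))) :
    (∀ x y : H, ⟪G x, y⟫ = ⟪x, G y⟫) ∧ ∀ v : H, v ≠ 0 → 0 < ⟪G v, v⟫ :=
  stmt_1_general A hsym hpos τ σ hτ hσ G hG
end

section
/- Let H be a finite-dimensional real inner product space, let A : H → H be a symmetric (self-adjoint) positive definite linear operator, let τ > 0, let σ ≥ √(3/8), and set Ã = A + (τ/2)A², G = (τ/2)(I + (4σ − 3/2)τA + (2σ² − 3/4)τ²A²). Suppose the sequence (yⁿ) in H satisfies, for every n ≥ 1, the homogeneous three-level factorized scheme (I + στA)² (yⁿ⁺¹ − yⁿ)/τ + (I + τA + (τ²/2)A² − (I + στA)²)(yⁿ − yⁿ⁻¹)/τ + (A + (τ/2)A²) yⁿ = 0. Then the energy ℰ_n = ⟨Ã (yⁿ + yⁿ⁻¹)/2, (yⁿ + yⁿ⁻¹)/2⟩ + ⟨G (yⁿ − yⁿ⁻¹)/τ, (yⁿ − yⁿ⁻¹)/τ⟩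 is nonincreasing: ℰ_{n+1} ≤ ℰ_n for all n ≥ 1, and consequently ℰ_n ≤ ℰ_1 for all n ≥ 1. -/
/-!
With `a = (yⁿ⁺¹ - yⁿ)/τ` and `b = (yⁿ - yⁿ⁻¹)/τ`, the scheme reads
`(B/2)(a + b) + (P² - B/2)(a - b) + Ã yⁿ = 0`. Pairing it with `τ (a + b) = yⁿ⁺¹ - yⁿ⁻¹`, every
term but the first telescopes because all operators are symmetric, which gives
`ℰ_{n+1} + (τ/2)⟪B (a + b), a + b⟫ = ℰ_n`. Finally `B = (I + τA/2)² + (τA/2)²` is nonnegative.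
-/

open RealInnerProductSpace

namespace FactorizedScheme

variable {H : Type*} [NormedAddCommGroup H] [InnerProductSpace ℝ H]

noncomputable def energy (K G : H →ₗ[ℝ] H) (τ : ℝ) (u v : H) : ℝ :=
  ⟪K ((1 / 2 : ℝ) • (u + v)), (1 / 2 : ℝ) • (u + v)⟫
    + ⟪G (τ⁻¹ • (u - v)), τ⁻¹ • (u - v)⟫

/-- For the scheme `D (yⁿ⁺¹ - yⁿ)/τ + (B - D) (yⁿ - yⁿ⁻¹)/τ + K yⁿ = 0`, the operator `G` for
which `energy K G τ yⁿ yⁿ⁻¹` telescopes. -/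
noncomputable def energyOperator (D B K : H →ₗ[ℝ] H) (τ : ℝ) : H →ₗ[ℝ] H :=
  τ • (D - (1 / 2 : ℝ) • B) - (τ ^ 2 / 4) • K

lemma _root_.LinearMap.IsSymmetric.inner_map_sub_add {T : H →ₗ[ℝ] H} (hT : T.IsSymmetric)
    (a b : H) : ⟪T (a - b), a + b⟫ = ⟪T a, a⟫ - ⟪T b, b⟫ := by
  simp only [map_sub, inner_sub_left, inner_add_right, hT b a, real_inner_comm b (T a)]
  ring

theorem energy_balance {D B K : H →ₗ[ℝ] H} (hD : D.IsSymmetric) (hB : B.IsSymmetric)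
    (hK : K.IsSymmetric) (τ : ℝ) {a b w : H} (h : D a + (B - D) b + K w = 0) :
    ⟪K (w + (τ / 2) • a), w + (τ / 2) • a⟫ + ⟪energyOperator D B K τ a, a⟫
      + τ / 2 * ⟪B (a + b), a + b⟫ =
    ⟪K (w - (τ / 2) • b), w - (τ / 2) • b⟫ + ⟪energyOperator D B K τ b, b⟫ := by
  have hsplit : D a + (B - D) b = (1 / 2 : ℝ) • B (a + b) + (D - (1 / 2 : ℝ) • B) (a - b) := by
    simp only [LinearMap.sub_apply, LinearMap.smul_apply, map_add, map_sub]
    module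
  have hpair : ⟪D a + (B - D) b + K w, a + b⟫ = 0 := by rw [h, inner_zero_left]
  rw [hsplit, inner_add_left, inner_add_left,
    (hD.sub (hB.smul (by simp))).inner_map_sub_add] at hpair
  simp only [energyOperator, LinearMap.sub_apply, LinearMap.smul_apply, inner_sub_left,
    inner_add_left, inner_add_right, inner_sub_right, real_inner_smul_left, real_inner_smul_right,
    map_add, map_sub, map_smul, hK a w, hK b w, real_inner_comm (K w) a,
    real_inner_comm (K w) b] at hpair ⊢
  linear_combination τ * hpair

theorem energy_le_of_scheme {D B K : H →ₗ[ℝ] H} (hD : D.IsSymmetric) (hB : B.IsSymmetric)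
    (hK : K.IsSymmetric) (hB₀ : ∀ v, 0 ≤ ⟪B v, v⟫) {τ : ℝ} (hτ : 0 < τ) {u v w : H}
    (h : D (τ⁻¹ • (u - v)) + (B - D) (τ⁻¹ • (v - w)) + K v = 0) :
    energy K (energyOperator D B K τ) τ u v ≤ energy K (energyOperator D B K τ) τ v w := by
  have hhalf : τ / 2 * τ⁻¹ = 1 / 2 := by field_simp
  have hfwd : (1 / 2 : ℝ) • (u + v) = v + (τ / 2) • τ⁻¹ • (u - v) := by
    rw [smul_smul, hhalf]; module
  have hbwd : (1 / 2 : ℝ) • (v + w) = v - (τ / 2) • τ⁻¹ • (v - w) := by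
    rw [smul_smul, hhalf]; module
  have hid := energy_balance hD hB hK τ h
  have hdiss := mul_nonneg (half_pos hτ).le (hB₀ (τ⁻¹ • (u - v) + τ⁻¹ • (v - w)))
  rw [energy, energy, hfwd, hbwd]
  linarith

lemma _root_.LinearMap.IsSymmetric.comp_self_s3 {A : H →ₗ[ℝ] H} (hA : A.IsSymmetric) :
    (A ∘ₗ A).IsSymmetric :=
  hA.mul_of_commute hA (Commute.refl A)

lemma _root_.LinearMap.IsSymmetric.inner_taylor_exp_apply_self_nonneg {A : H →ₗ[ℝ] H}
    (hA : A.IsSymmetric) (τ : ℝ) (v : H) :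
    0 ≤ ⟪(LinearMap.id + τ • A + (τ ^ 2 / 2) • (A ∘ₗ A) : H →ₗ[ℝ] H) v, v⟫ := by
  have hsq : ⟪(LinearMap.id + τ • A + (τ ^ 2 / 2) • (A ∘ₗ A) : H →ₗ[ℝ] H) v, v⟫
      = ‖v + (τ / 2) • A v‖ ^ 2 + ‖(τ / 2) • A v‖ ^ 2 := by
    simp only [← real_inner_self_eq_norm_sq, LinearMap.add_apply, LinearMap.smul_apply,
      LinearMap.comp_apply, LinearMap.id_apply, inner_add_left, inner_add_right,
      real_inner_smul_left, real_inner_smul_right, hA (A v) v, real_inner_comm v (A v)]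
    ring
  rw [hsq]
  positivity

lemma energyOperator_factorized (A : H →ₗ[ℝ] H) (τ σ : ℝ) :
    energyOperator ((LinearMap.id + (σ * τ) • A) ∘ₗ (LinearMap.id + (σ * τ) • A))
      (LinearMap.id + τ • A + (τ ^ 2 / 2) • (A ∘ₗ A)) (A + (τ / 2) • (A ∘ₗ A)) τ
    = (τ / 2) • (LinearMap.id + ((4 * σ - 3 / 2) * τ) • A
      + ((2 * σ ^ 2 - 3 / 4) * τ ^ 2) • (A ∘ₗ A)) := by
  ext v
  simp only [energyOperator, LinearMap.add_apply, LinearMap.sub_apply, LinearMap.smul_apply,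
    LinearMap.comp_apply, LinearMap.id_apply, map_add, map_smul]
  module

end FactorizedScheme

open FactorizedScheme

theorem stmt_3_general {H : Type*} [NormedAddCommGroup H] [InnerProductSpace ℝ H]
    (A : H →ₗ[ℝ] H)
    (hsym : ∀ x y : H, ⟪A x, y⟫ = ⟪x, A y⟫)
    (τ σ : ℝ) (hτ : 0 < τ)
    (Atil B G P : H →ₗ[ℝ] H)
    (hAtil : Atil = A + (τ / 2) • (A ∘ₗ A))
    (hB : B = LinearMap.id + τ • A + (τ ^ 2 / 2) • (A ∘ₗ A))
    (hG : G = (τ / 2) • (LinearMap.id + ((4 * σ - 3 / 2) * τ) • A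
      + ((2 * σ ^ 2 - 3 / 4) * τ ^ 2) • (A ∘ₗ A)))
    (hP : P = LinearMap.id + (σ * τ) • A)
    (y : ℕ → H)
    (hscheme : ∀ n : ℕ, 1 ≤ n →
      (P ∘ₗ P) (τ⁻¹ • (y (n + 1) - y n))
        + (B - P ∘ₗ P) (τ⁻¹ • (y n - y (n - 1)))
        + Atil (y n) = 0)
    (E : ℕ → ℝ)
    (hE : ∀ n : ℕ, E n =
      ⟪Atil ((1 / 2 : ℝ) • (y n + y (n - 1))), (1 / 2 : ℝ) • (y n + y (n - 1))⟫
      + ⟪G (τ⁻¹ • (y n - y (n - 1))), τ⁻¹ • (y n - y (n - 1))⟫) :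
    (∀ n : ℕ, 1 ≤ n → E (n + 1) ≤ E n) ∧ (∀ n : ℕ, 1 ≤ n → E n ≤ E 1) := by
  have hA : A.IsSymmetric := hsym
  have hA₂ : (A ∘ₗ A).IsSymmetric := hA.comp_self_s3
  have hPsym : P.IsSymmetric := hP ▸ LinearMap.IsSymmetric.id.add (hA.smul (conj_trivial _))
  have hBsym : B.IsSymmetric :=
    hB ▸ (LinearMap.IsSymmetric.id.add (hA.smul (conj_trivial _))).add (hA₂.smul (conj_trivial _))
  have hAtilsym : Atil.IsSymmetric := hAtil ▸ hA.add (hA₂.smul (conj_trivial _))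
  have hG' : G = energyOperator (P ∘ₗ P) B Atil τ := by
    rw [hG, hP, hB, hAtil, energyOperator_factorized]
  have hstep : ∀ n : ℕ, 1 ≤ n → E (n + 1) ≤ E n := by
    intro n hn
    rw [hE, hE, hG', Nat.add_sub_cancel]
    exact energy_le_of_scheme hPsym.comp_self_s3 hBsym hAtilsym
      (hB ▸ hA.inner_taylor_exp_apply_self_nonneg τ) hτ (hscheme n hn)
  exact ⟨hstep, fun n hn ↦ antitoneOn_nat_Ici_of_succ_le hstep Set.self_mem_Ici hn hn⟩

/-- For the homogeneous three-level factorized scheme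
`(I + στA)² (yⁿ⁺¹ − yⁿ)/τ + (I + τA + (τ²/2)A² − (I + στA)²)(yⁿ − yⁿ⁻¹)/τ
 + (A + (τ/2)A²) yⁿ = 0`
with a symmetric positive definite `A`, `τ > 0` and `σ ≥ √(3/8)`, the energy
`ℰ_n` is nonincreasing and `ℰ_n ≤ ℰ_1` for all `n ≥ 1`.
Here `P = I + στA` and `B = I + τA + (τ²/2)A²`, so `P ∘ₗ P = (I + στA)²`. -/
theorem stmt_3 {H : Type*} [NormedAddCommGroup H] [InnerProductSpace ℝ H]
    [FiniteDimensional ℝ H]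
    (A : H →ₗ[ℝ] H)
    (hsym : ∀ x y : H, ⟪A x, y⟫ = ⟪x, A y⟫)
    (hpos : ∀ v : H, v ≠ 0 → 0 < ⟪A v, v⟫)
    (τ σ : ℝ) (hτ : 0 < τ) (hσ : Real.sqrt (3 / 8) ≤ σ)
    (Atil B G P : H →ₗ[ℝ] H)
    (hAtil : Atil = A + (τ / 2) • (A ∘ₗ A))
    (hB : B = LinearMap.id + τ • A + (τ ^ 2 / 2) • (A ∘ₗ A))
    (hG : G = (τ / 2) • (LinearMap.id + ((4 * σ - 3 / 2) * τ) • A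
      + ((2 * σ ^ 2 - 3 / 4) * τ ^ 2) • (A ∘ₗ A)))
    (hP : P = LinearMap.id + (σ * τ) • A)
    (y : ℕ → H)
    (hscheme : ∀ n : ℕ, 1 ≤ n →
      (P ∘ₗ P) (τ⁻¹ • (y (n + 1) - y n))
        + (B - P ∘ₗ P) (τ⁻¹ • (y n - y (n - 1)))
        + Atil (y n) = 0)
    (E : ℕ → ℝ)
    (hE : ∀ n : ℕ, E n =
      ⟪Atil ((1 / 2 : ℝ) • (y n + y (n - 1))), (1 / 2 : ℝ) • (y n + y (n - 1))⟫
      + ⟪G (τ⁻¹ • (y n - y (n - 1))), τ⁻¹ • (y n - y (n - 1))⟫) :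
    (∀ n : ℕ, 1 ≤ n → E (n + 1) ≤ E n) ∧ (∀ n : ℕ, 1 ≤ n → E n ≤ E 1) :=
  stmt_3_general A hsym τ σ hτ Atil B G P hAtil hB hG hP y hscheme E hE
end

section
/- Let H be a finite-dimensional real inner product space, let A : H → H be a symmetric (self-adjoint) positive definite linear operator, let τ > 0 and σ > 0. Suppose y, ỹ, y⁺ ∈ H satisfy the prediction step (I + τA)(ỹ − y)/τ + A y = 0 and the correction step (I + στA)² (y⁺ − y)/τ + (I + τA + (τ²/2)A² − (I + στA)²)(ỹ − y)/τ + (A + (τ/2)A²) y = 0. Then (I + τA)(I + στA)² y⁺ = (I + 2στA + (σ² − 1/2)τ²A²) y; that is, y⁺ = s(τA) y where s is the stability function s(z) = (1 + 2σz + (σ² − 1/2)z²) / (1 + (1+2σ)z + (σ² + 2σ)z² + σ²z³). -/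
/-!
Write `B = I + τA`, `P = I + στA`, and let `C = I + τA + (τ²/2)A² - P²` be the operator acting on
the predictor increment in the correction step. Since `B` commutes with `C`, applying `B` to the
correction step lets the prediction step `B (ỹ - y)/τ = -A y` eliminate `ỹ`, which leaves
`B P² y⁺ = (B P² + τ (C A - B (A + (τ/2)A²))) y`. With `z = τA` the operator on the right is
`(1 + z)(1 + σz)² + z (1 + z + z²/2 - (1 + σz)²) - (1 + z)(z + z²/2) = (1 + σz)² - z²/2`.
-/

open RealInnerProductSpace

theorem LinearMap.comp_apply_eq_sub_of_add_eq_zero {R M : Type*} [Semiring R]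
    [AddCommGroup M] [Module R M] {B Q C : M →ₗ[R] M} (hBC : B ∘ₗ C = C ∘ₗ B) {e d u v : M}
    (he : B e + u = 0) (hd : Q d + C e + v = 0) :
    (B ∘ₗ Q) d = C u - B v := by
  have hBe : B e = -u := eq_neg_of_add_eq_zero_left he
  have hQd : Q d = -(C e + v) := eq_neg_of_add_eq_zero_left (by rwa [← add_assoc])
  have hBCe : B (C e) = C (B e) := LinearMap.congr_fun hBC e
  rw [comp_apply, hQd, map_neg, map_add, hBCe, hBe, map_neg]
  abel

section PadeCorrection

variable {K M : Type*} [Field K] [AddCommGroup M] [Module K M] (A : M →ₗ[K] M) (τ σ : K)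

theorem LinearMap.comp_padeCorrection_comm :
    (LinearMap.id + τ • A) ∘ₗ
        (LinearMap.id + τ • A + (τ ^ 2 / 2) • (A ∘ₗ A)
          - (LinearMap.id + (σ * τ) • A) ∘ₗ (LinearMap.id + (σ * τ) • A))
      = (LinearMap.id + τ • A + (τ ^ 2 / 2) • (A ∘ₗ A)
          - (LinearMap.id + (σ * τ) • A) ∘ₗ (LinearMap.id + (σ * τ) • A))
        ∘ₗ (LinearMap.id + τ • A) := by
  ext x
  simp only [comp_apply, add_apply, sub_apply, smul_apply, id_apply, map_add, map_sub, map_smul]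
  module

theorem LinearMap.padeStability_identity (x : M) :
    ((LinearMap.id + τ • A : M →ₗ[K] M) ∘ₗ
        ((LinearMap.id + (σ * τ) • A) ∘ₗ (LinearMap.id + (σ * τ) • A))) x
      + τ • ((LinearMap.id + τ • A + (τ ^ 2 / 2) • (A ∘ₗ A)
          - (LinearMap.id + (σ * τ) • A) ∘ₗ (LinearMap.id + (σ * τ) • A) : M →ₗ[K] M) (A x)
        - (LinearMap.id + τ • A : M →ₗ[K] M) ((A + (τ / 2) • (A ∘ₗ A)) x))
      = (LinearMap.id + (2 * σ * τ) • A + ((σ ^ 2 - 1 / 2) * τ ^ 2) • (A ∘ₗ A) : M →ₗ[K] M) x := by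
  simp only [comp_apply, add_apply, sub_apply, smul_apply, id_apply, map_add, map_smul]
  module

end PadeCorrection

theorem stmt_4_general {H : Type*} [NormedAddCommGroup H] [InnerProductSpace ℝ H]
    (A : H →ₗ[ℝ] H)
    (τ σ : ℝ) (hτ : 0 < τ)
    (P : H →ₗ[ℝ] H) (hP : P = LinearMap.id + (σ * τ) • A)
    (y ytil yplus : H)
    (hpred : ((LinearMap.id + τ • A : H →ₗ[ℝ] H)) (τ⁻¹ • (ytil - y)) + A y = 0)
    (hcorr : (P ∘ₗ P) (τ⁻¹ • (yplus - y))
      + ((LinearMap.id + τ • A + (τ ^ 2 / 2) • (A ∘ₗ A) - P ∘ₗ P : H →ₗ[ℝ] H))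
          (τ⁻¹ • (ytil - y))
      + ((A + (τ / 2) • (A ∘ₗ A) : H →ₗ[ℝ] H)) y = 0) :
    (((LinearMap.id + τ • A : H →ₗ[ℝ] H)) ∘ₗ (P ∘ₗ P)) yplus
      = ((LinearMap.id + (2 * σ * τ) • A
        + ((σ ^ 2 - 1 / 2) * τ ^ 2) • (A ∘ₗ A) : H →ₗ[ℝ] H)) y := by
  subst hP
  have hincr := LinearMap.comp_apply_eq_sub_of_add_eq_zero
    (LinearMap.comp_padeCorrection_comm A τ σ) hpred hcorr
  have hyplus : yplus = y + τ • τ⁻¹ • (yplus - y) := by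
    rw [smul_inv_smul₀ hτ.ne', add_sub_cancel]
  rw [← LinearMap.padeStability_identity, ← hincr, hyplus, map_add, map_smul,
    smul_inv_smul₀ hτ.ne', add_sub_cancel]

/-- If `y, ỹ, y⁺` satisfy the prediction step
`(I + τA)(ỹ − y)/τ + A y = 0` and the correction step
`(I + στA)² (y⁺ − y)/τ + (I + τA + (τ²/2)A² − (I + στA)²)(ỹ − y)/τ + (A + (τ/2)A²) y = 0`
then `(I + τA)(I + στA)² y⁺ = (I + 2στA + (σ² − 1/2)τ²A²) y`.
Here `P = I + στA`, so `P ∘ₗ P = (I + στA)²`. -/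
theorem stmt_4 {H : Type*} [NormedAddCommGroup H] [InnerProductSpace ℝ H]
    [FiniteDimensional ℝ H]
    (A : H →ₗ[ℝ] H)
    (hsym : ∀ x y : H, ⟪A x, y⟫ = ⟪x, A y⟫)
    (hpos : ∀ v : H, v ≠ 0 → 0 < ⟪A v, v⟫)
    (τ σ : ℝ) (hτ : 0 < τ) (hσ : 0 < σ)
    (P : H →ₗ[ℝ] H) (hP : P = LinearMap.id + (σ * τ) • A)
    (y ytil yplus : H)
    (hpred : ((LinearMap.id + τ • A : H →ₗ[ℝ] H)) (τ⁻¹ • (ytil - y)) + A y = 0)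
    (hcorr : (P ∘ₗ P) (τ⁻¹ • (yplus - y))
      + ((LinearMap.id + τ • A + (τ ^ 2 / 2) • (A ∘ₗ A) - P ∘ₗ P : H →ₗ[ℝ] H))
          (τ⁻¹ • (ytil - y))
      + ((A + (τ / 2) • (A ∘ₗ A) : H →ₗ[ℝ] H)) y = 0) :
    (((LinearMap.id + τ • A : H →ₗ[ℝ] H)) ∘ₗ (P ∘ₗ P)) yplus
      = ((LinearMap.id + (2 * σ * τ) • A
        + ((σ ^ 2 - 1 / 2) * τ ^ 2) • (A ∘ₗ A) : H →ₗ[ℝ] H)) y :=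
  stmt_4_general A τ σ hτ P hP y ytil yplus hpred hcorr
end

section
/- Let σ ≥ 1/√2 and define s(z) = (1 + 2σz + (σ² − 1/2)z²) / (1 + (1+2σ)z + (σ² + 2σ)z² + σ²z³) for z ≥ 0. Then s is strictly decreasing on [0, ∞): for all 0 ≤ z₁ < z₂ one has s(z₂) < s(z₁). -/
/-!
Cross-multiplying, `s z₂ < s z₁` amounts to `N z₂ D z₁ < N z₁ D z₂` for the numerator `N` and
denominator `D` of `s`. The difference `N x D y - N y D x` is a polynomial vanishing on `x = y`,
and it factors as `(y - x) Q(x, y)` with `Q` symmetric. Every coefficient of `Q` as a polynomial in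
`x, y` is nonnegative once `σ ≥ 0`, except that of `x²y²`, which is `σ²(σ² - 1/2)`; hence the
threshold `σ ≥ 1/√2`.
-/

noncomputable def stabilityNum (σ z : ℝ) : ℝ := 1 + 2 * σ * z + (σ ^ 2 - 1 / 2) * z ^ 2

noncomputable def stabilityDen (σ z : ℝ) : ℝ :=
  1 + (1 + 2 * σ) * z + (σ ^ 2 + 2 * σ) * z ^ 2 + σ ^ 2 * z ^ 3

noncomputable def stabilityDiffQuot (σ x y : ℝ) : ℝ :=
  1 + (2 * σ + 1 / 2) * (x + y) + σ ^ 2 * (x ^ 2 + x * y + y ^ 2)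
    + (3 * σ ^ 2 + σ + 1 / 2) * (x * y) + 2 * σ ^ 3 * (x * y * (x + y))
    + σ ^ 2 * (σ ^ 2 - 1 / 2) * (x ^ 2 * y ^ 2)

theorem stabilityNum_mul_stabilityDen_sub (σ x y : ℝ) :
    stabilityNum σ x * stabilityDen σ y - stabilityNum σ y * stabilityDen σ x
      = (y - x) * stabilityDiffQuot σ x y := by
  unfold stabilityNum stabilityDen stabilityDiffQuot
  ring

section

variable {σ : ℝ}

theorem stabilityDen_pos (hσ : 0 ≤ σ) {z : ℝ} (hz : 0 ≤ z) : 0 < stabilityDen σ z := by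
  unfold stabilityDen
  positivity

theorem stabilityDiffQuot_pos (hσ : 0 ≤ σ) (hσ2 : 1 / 2 ≤ σ ^ 2) {x y : ℝ} (hx : 0 ≤ x)
    (hy : 0 ≤ y) : 0 < stabilityDiffQuot σ x y := by
  have hgap : 0 ≤ σ ^ 2 - 1 / 2 := sub_nonneg.2 hσ2
  unfold stabilityDiffQuot
  positivity

theorem stabilityNum_div_stabilityDen_strictAntiOn (hσ : 0 ≤ σ) (hσ2 : 1 / 2 ≤ σ ^ 2) :
    StrictAntiOn (fun z => stabilityNum σ z / stabilityDen σ z) (Set.Ici 0) := by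
  intro x hx y hy hxy
  rw [Set.mem_Ici] at hx hy
  rw [div_lt_div_iff₀ (stabilityDen_pos hσ hy) (stabilityDen_pos hσ hx), ← sub_pos,
    stabilityNum_mul_stabilityDen_sub]
  exact mul_pos (sub_pos.2 hxy) (stabilityDiffQuot_pos hσ hσ2 hx hy)

theorem nonneg_and_half_le_sq_of_inv_sqrt_two_le (hσ : 1 / Real.sqrt 2 ≤ σ) :
    0 ≤ σ ∧ 1 / 2 ≤ σ ^ 2 := by
  rwa [one_div, ← Real.sqrt_inv, Real.sqrt_le_iff, ← one_div] at hσ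

end

/-- For `σ ≥ 1/√2`, the stability function
`s(z) = (1 + 2σz + (σ² − 1/2)z²)/(1 + (1+2σ)z + (σ² + 2σ)z² + σ²z³)`
is strictly decreasing on `[0, ∞)`. -/
theorem stmt_5 (σ : ℝ) (hσ : 1 / Real.sqrt 2 ≤ σ)
    (s : ℝ → ℝ)
    (hs : ∀ z : ℝ, s z =
      (1 + 2 * σ * z + (σ ^ 2 - 1 / 2) * z ^ 2)
      / (1 + (1 + 2 * σ) * z + (σ ^ 2 + 2 * σ) * z ^ 2 + σ ^ 2 * z ^ 3)) :
    ∀ z₁ z₂ : ℝ, 0 ≤ z₁ → z₁ < z₂ → s z₂ < s z₁ := by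
  intro z₁ z₂ h₁ h₁₂
  obtain ⟨hσ0, hσ2⟩ := nonneg_and_half_le_sq_of_inv_sqrt_two_le hσ
  have hanti := stabilityNum_div_stabilityDen_strictAntiOn hσ0 hσ2
  rw [hs, hs]
  exact hanti (Set.mem_Ici.2 h₁) (Set.mem_Ici.2 (h₁.trans h₁₂.le)) h₁₂
end

section
/- Let σ > 0 and define s(z) = (1 + 2σz + (σ² − 1/2)z²) / (1 + (1+2σ)z + (σ² + 2σ)z² + σ²z³). Then s approximates exp(−z) with second-order accuracy at z = 0: there exist constants C > 0 and δ > 0 such that |exp(−z) − s(z)| ≤ C|z|³ for all |z| ≤ δ; equivalently, s(0) = 1, s′(0) = −1 and s″(0) = 1. -/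
/-! Clearing the denominator `D` of `s`, the Taylor polynomial `T z = 1 - z + z²/2` of `exp (-z)`
satisfies `N - T D = z³ Q` for an explicit quadratic `Q`, so `s - T = z³ Q / D = O(z³)` because
`D 0 = 1`. Together with `exp (-z) - T z = O(z³)` this gives the cubic bound near `0`. -/

open Filter Topology Asymptotics

lemma Real.exp_neg_sub_taylor_isBigO_pow_three :
    (fun z : ℝ => Real.exp (-z) - (1 - z + z ^ 2 / 2)) =O[𝓝 0] fun z => z ^ 3 := by
  have h := (Real.exp_sub_sum_range_isBigO_pow 3).comp_tendsto
    (continuous_neg.tendsto' (0 : ℝ) 0 neg_zero)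
  simp only [Function.comp_def, Finset.sum_range_succ, Finset.sum_range_zero] at h
  refine (h.trans (isBigO_of_le _ fun z => ?_)).congr_left fun z => ?_
  · simp [norm_pow]
  · norm_num [Nat.factorial]
    ring

lemma isBigO_div_sub_of_sub_mul_eq_pow_mul {𝕜 : Type*} [NormedField 𝕜] {N D T Q : 𝕜 → 𝕜}
    {a : 𝕜} {n : ℕ} (hD : ContinuousAt D a) (hDa : D a ≠ 0) (hQ : ContinuousAt Q a)
    (h : ∀ z, N z - T z * D z = (z - a) ^ n * Q z) :
    (fun z => N z / D z - T z) =O[𝓝 a] fun z => (z - a) ^ n := by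
  have hquot : (fun z => Q z / D z) =O[𝓝 a] fun _ => (1 : 𝕜) := (hQ.div hD hDa).isBigO
  refine ((isBigO_refl (fun z => (z - a) ^ n) _).mul hquot).congr' ?_ (by simp)
  filter_upwards [hD.eventually_ne hDa] with z hz
  rw [mul_div_assoc', ← h, sub_div, mul_div_cancel_right₀ _ hz]

lemma exists_pos_bound_of_isBigO_pow {f : ℝ → ℝ} {n : ℕ}
    (h : f =O[𝓝 0] fun z => z ^ n) :
    ∃ C > (0 : ℝ), ∃ δ > (0 : ℝ), ∀ z : ℝ, |z| ≤ δ → |f z| ≤ C * |z| ^ n := by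
  obtain ⟨C, hC, hCf⟩ := h.exists_pos
  obtain ⟨ε, hε, hball⟩ := Metric.eventually_nhds_iff.mp hCf.bound
  refine ⟨C, hC, ε / 2, half_pos hε, fun z hz => ?_⟩
  simpa using hball (show dist z 0 < ε by rw [Real.dist_0_eq_abs]; linarith)

theorem stmt_9_general (σ : ℝ)
    (s : ℝ → ℝ)
    (hs : ∀ z : ℝ, s z =
      (1 + 2 * σ * z + (σ ^ 2 - 1 / 2) * z ^ 2)
      / (1 + (1 + 2 * σ) * z + (σ ^ 2 + 2 * σ) * z ^ 2 + σ ^ 2 * z ^ 3)) :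
    ∃ C > (0 : ℝ), ∃ δ > (0 : ℝ), ∀ z : ℝ, |z| ≤ δ →
      |Real.exp (-z) - s z| ≤ C * |z| ^ 3 := by
  have hs_taylor : (fun z => s z - (1 - z + z ^ 2 / 2)) =O[𝓝 0] fun z => z ^ 3 := by
    simpa only [hs, sub_zero] using
      isBigO_div_sub_of_sub_mul_eq_pow_mul (a := 0) (by fun_prop) (by norm_num) (by fun_prop)
        (Q := fun z => σ - 1 / 2 - (σ - σ ^ 2 / 2) * z - σ ^ 2 / 2 * z ^ 2) fun z => by ring
  apply exists_pos_bound_of_isBigO_pow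
  simpa using Real.exp_neg_sub_taylor_isBigO_pow_three.sub hs_taylor

/-- For `σ > 0`, the stability function
`s(z) = (1 + 2σz + (σ² − 1/2)z²)/(1 + (1+2σ)z + (σ² + 2σ)z² + σ²z³)`
approximates `exp(−z)` with second-order accuracy at `z = 0`:
`|exp(−z) − s(z)| ≤ C|z|³` for all `|z| ≤ δ`. -/
theorem stmt_9 (σ : ℝ) (hσ : 0 < σ)
    (s : ℝ → ℝ)
    (hs : ∀ z : ℝ, s z =
      (1 + 2 * σ * z + (σ ^ 2 - 1 / 2) * z ^ 2)
      / (1 + (1 + 2 * σ) * z + (σ ^ 2 + 2 * σ) * z ^ 2 + σ ^ 2 * z ^ 3)) :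
    ∃ C > (0 : ℝ), ∃ δ > (0 : ℝ), ∀ z : ℝ, |z| ≤ δ →
      |Real.exp (-z) - s z| ≤ C * |z| ^ 3 :=
  stmt_9_general σ s hs
end
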